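/- Let T be a J-unitary operator on K and let z be a complex number with |z| = 1. Then T − z·1 is a Fredholm operator on K if and only if V(z̄T) − 1 is a Fredholm operator on K. -/

import Mathlib

noncomputable section

open ContinuousLinearMap

variable {H : Type*} [NormedAddCommGroup H] [InnerProductSpace ℂ H] [CompleteSpace H]
  [TopologicalSpace.SeparableSpace H]

local notation "K" => WithLp 2 (H × H)

/-- The 2×2 block operator `[[a,b],[c,d]]` on `K = H ⊕ H`. -/
def blk (a b c d : H →L[ℂ] H) : K →L[ℂ] K :=
  (((WithLp.prodContinuousLinearEquiv 2 ℂ H H).symm : (H × H) →L[ℂ] K).comp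
      ((((a.comp (fst ℂ H H)) + (b.comp (snd ℂ H H))).prod
        ((c.comp (fst ℂ H H)) + (d.comp (snd ℂ H H)))))).comp
    ((WithLp.prodContinuousLinearEquiv 2 ℂ H H : K →L[ℂ] (H × H)))

/-- The fundamental symmetry `J = [[1,0],[0,-1]]`. -/
def fundJ : K →L[ℂ] K := blk 1 0 0 (-1)

/-- A bounded operator `T` on the Krein space `(K, J)` is `J`-unitary if it is invertible
and `T* J T = J`. -/
def IsJUnitary (T : K →L[ℂ] K) : Prop :=
  IsUnit T ∧ star T * fundJ * T = fundJ

/-- A bounded operator on a Hilbert space is Fredholm: finite-dimensional kernel,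
closed range, and finite-dimensional orthogonal complement of the range. -/
def IsFredholmOp (A : K →L[ℂ] K) : Prop :=
  FiniteDimensional ℂ (LinearMap.ker (A : K →ₗ[ℂ] K)) ∧ IsClosed (Set.range A : Set K) ∧
    FiniteDimensional ℂ ↥((LinearMap.range (A : K →ₗ[ℂ] K))ᗮ)

/-!
For a `J`-unitary `T = [[a,b],[c,d]]` the identities `T*JT = J = TJT*` give
`a*a = 1 + c*c`, `aa* = 1 + bb*`, `d*d = 1 + b*b`, `dd* = 1 + cc*` and `a*b = c*d`. Hence `a` and `d`
are invertible and the Schur complement `a - bd⁻¹c` is `(a*)⁻¹`. With this one checks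
`V(z̄T) - 1 = (z̄J)(T - z)W` for the invertible lower triangular `W = [[1,0],[-d⁻¹c, zd⁻¹]]`,
and being Fredholm is invariant under multiplication by invertible operators on either side.
-/

section Fredholm

variable {𝕜 E : Type*} [NontriviallyNormedField 𝕜] [NormedAddCommGroup E] [NormedSpace 𝕜 E]

lemma ker_units_mul_mul (U V : (E →L[𝕜] E)ˣ) (A : E →L[𝕜] E) :
    LinearMap.ker ((↑U * A * ↑V : E →L[𝕜] E) : E →ₗ[𝕜] E) =
      (LinearMap.ker (A : E →ₗ[𝕜] E)).map ((ContinuousLinearEquiv.ofUnit V).symm : E →ₗ[𝕜] E) := by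
  ext x
  rw [Submodule.mem_map_equiv]
  exact (ContinuousLinearEquiv.ofUnit U).map_eq_zero_iff

lemma finiteDimensional_ker_units_mul_mul (U V : (E →L[𝕜] E)ˣ) {A : E →L[𝕜] E}
    (hA : FiniteDimensional 𝕜 (LinearMap.ker (A : E →ₗ[𝕜] E))) :
    FiniteDimensional 𝕜 (LinearMap.ker ((↑U * A * ↑V : E →L[𝕜] E) : E →ₗ[𝕜] E)) := by
  rw [ker_units_mul_mul]
  infer_instance

lemma isClosed_range_units_mul_mul (U V : (E →L[𝕜] E)ˣ) {A : E →L[𝕜] E}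
    (hA : IsClosed (Set.range A)) : IsClosed (Set.range (↑U * A * ↑V : E →L[𝕜] E)) := by
  change IsClosed (Set.range (⇑(U : E →L[𝕜] E) ∘ A ∘ ⇑(V : E →L[𝕜] E)))
  have hV : Set.range (V : E →L[𝕜] E) = Set.univ :=
    (ContinuousLinearEquiv.ofUnit V).surjective.range_eq
  rw [Set.range_comp, Set.range_comp, hV, Set.image_univ]
  exact (ContinuousLinearEquiv.ofUnit U).toHomeomorph.isClosedMap _ hA

lemma finiteDimensional_orthogonal_range_units_mul_mul {F : Type*} [NormedAddCommGroup F]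
    [InnerProductSpace ℂ F] [CompleteSpace F] (U V : (F →L[ℂ] F)ˣ) {A : F →L[ℂ] F}
    (hA : FiniteDimensional ℂ (LinearMap.range (A : F →ₗ[ℂ] F))ᗮ) :
    FiniteDimensional ℂ (LinearMap.range ((↑U * A * ↑V : F →L[ℂ] F) : F →ₗ[ℂ] F))ᗮ := by
  rw [orthogonal_range] at hA ⊢
  rw [← star_eq_adjoint, star_mul, star_mul, ← mul_assoc]
  exact finiteDimensional_ker_units_mul_mul (star V) (star U) hA

end Fredholm

section Algebra

lemma mul_mul_eq_of_mul_mul_eq {M : Type*} [Monoid M] {J S : M} (T : Mˣ) (hJ : J * J = 1)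
    (h : S * J * T = J) : T * J * S = J := by
  have hT : (↑T⁻¹ : M) = J * S * J :=
    Units.inv_eq_of_mul_eq_one_left (by simp only [mul_assoc] at h ⊢; rw [h, hJ])
  calc ↑T * J * S = ↑T * (J * S * J) * J := by simp only [mul_assoc, hJ, mul_one]
    _ = J := by rw [← hT, Units.mul_inv, one_mul]

lemma isUnit_of_isUnit_mul_of_isUnit_mul {M : Type*} [Monoid M] {x y z : M}
    (h₁ : IsUnit (y * x)) (h₂ : IsUnit (x * z)) : IsUnit x :=
  isUnit_iff_exists_and_exists.2
    ⟨⟨z * ↑h₂.unit⁻¹, by rw [← mul_assoc]; exact h₂.mul_val_inv⟩,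
      ⟨↑h₁.unit⁻¹ * y, by rw [mul_assoc]; exact h₁.val_inv_mul⟩⟩

lemma IsUnit.smul_of_ne_zero {G₀ M : Type*} [GroupWithZero G₀] [Monoid M] [MulAction G₀ M]
    [SMulCommClass G₀ M M] [IsScalarTower G₀ M M] {g : G₀} (hg : g ≠ 0) {m : M}
    (hm : IsUnit m) : IsUnit (g • m) :=
  hm.smul (Units.mk0 g hg)

variable {A : Type*} [CStarAlgebra A] [PartialOrder A] [StarOrderedRing A]

lemma isUnit_one_add_star_mul_self (y : A) : IsUnit (1 + star y * y) :=
  CStarAlgebra.isUnit_of_le 1 (le_add_of_nonneg_right (star_mul_self_nonneg y))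

lemma isUnit_of_star_mul_self_eq_one_add {x y w : A} (h₁ : star x * x = 1 + star y * y)
    (h₂ : x * star x = 1 + w * star w) : IsUnit x := by
  refine isUnit_of_isUnit_mul_of_isUnit_mul (y := star x) (z := star x) ?_ ?_
  · simpa [h₁] using isUnit_one_add_star_mul_self y
  · simpa [h₂] using isUnit_one_add_star_mul_self (star w)

end Algebra

section KreinSpace

omit [TopologicalSpace.SeparableSpace H]

lemma IsFredholmOp.units_mul_mul (U V : (K →L[ℂ] K)ˣ) {A : K →L[ℂ] K} (hA : IsFredholmOp A) :
    IsFredholmOp ((U : K →L[ℂ] K) * A * (V : K →L[ℂ] K)) :=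
  ⟨finiteDimensional_ker_units_mul_mul U V hA.1, isClosed_range_units_mul_mul U V hA.2.1,
    finiteDimensional_orthogonal_range_units_mul_mul U V hA.2.2⟩

lemma isFredholmOp_mul_mul_iff {U V A : K →L[ℂ] K} (hU : IsUnit U) (hV : IsUnit V) :
    IsFredholmOp (U * A * V) ↔ IsFredholmOp A := by
  obtain ⟨U, rfl⟩ := hU
  obtain ⟨V, rfl⟩ := hV
  refine ⟨fun h => ?_, IsFredholmOp.units_mul_mul U V⟩
  simpa [mul_assoc] using IsFredholmOp.units_mul_mul U⁻¹ V⁻¹ h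

section BlockOperators

omit [CompleteSpace H]

@[simp] lemma blk_apply_fst (a b c d : H →L[ℂ] H) (x : K) :
    (blk a b c d x).fst = a x.fst + b x.snd := rfl

@[simp] lemma blk_apply_snd (a b c d : H →L[ℂ] H) (x : K) :
    (blk a b c d x).snd = c x.fst + d x.snd := rfl

lemma ext_fst_snd {f g : K →L[ℂ] K} (h₁ : ∀ x, (f x).fst = (g x).fst)
    (h₂ : ∀ x, (f x).snd = (g x).snd) : f = g :=
  ContinuousLinearMap.ext fun x => WithLp.ofLp_injective 2 (Prod.ext (h₁ x) (h₂ x))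

lemma blk_mul (a b c d a' b' c' d' : H →L[ℂ] H) :
    blk a b c d * blk a' b' c' d' =
      blk (a * a' + b * c') (a * b' + b * d') (c * a' + d * c') (c * b' + d * d') := by
  refine ext_fst_snd (fun x => ?_) (fun x => ?_) <;>
    simp only [mul_apply_eq_comp, blk_apply_fst, blk_apply_snd, map_add, add_apply] <;> abel

lemma blk_one_zero_zero_one : blk (1 : H →L[ℂ] H) 0 0 1 = 1 :=
  ext_fst_snd (fun x => by simp) (fun x => by simp)

lemma blk_sub (a b c d a' b' c' d' : H →L[ℂ] H) :
    blk a b c d - blk a' b' c' d' = blk (a - a') (b - b') (c - c') (d - d') := by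
  refine ext_fst_snd (fun x => ?_) (fun x => ?_) <;>
    simp only [sub_apply, WithLp.sub_fst, WithLp.sub_snd, blk_apply_fst, blk_apply_snd] <;> abel

lemma smul_blk (z : ℂ) (a b c d : H →L[ℂ] H) :
    z • blk a b c d = blk (z • a) (z • b) (z • c) (z • d) :=
  ext_fst_snd (fun x => by simp) (fun x => by simp)

lemma blk_inj {a b c d a' b' c' d' : H →L[ℂ] H} :
    blk a b c d = blk a' b' c' d' ↔ a = a' ∧ b = b' ∧ c = c' ∧ d = d' := by
  refine ⟨fun h => ?_, by rintro ⟨rfl, rfl, rfl, rfl⟩; rfl⟩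
  have h₁ (v : H) := congr(($h (WithLp.toLp 2 (v, 0))).fst)
  have h₂ (v : H) := congr(($h (WithLp.toLp 2 (0, v))).fst)
  have h₃ (v : H) := congr(($h (WithLp.toLp 2 (v, 0))).snd)
  have h₄ (v : H) := congr(($h (WithLp.toLp 2 (0, v))).snd)
  simp only [blk_apply_fst, blk_apply_snd, WithLp.toLp_fst, WithLp.toLp_snd, map_zero, add_zero,
    zero_add] at h₁ h₂ h₃ h₄
  exact ⟨ext h₁, ext h₂, ext h₃, ext h₄⟩

lemma isUnit_blk_one_zero (c : H →L[ℂ] H) {d : H →L[ℂ] H} (hd : IsUnit d) :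
    IsUnit (blk 1 0 c d) := by
  refine isUnit_iff_exists.2 ⟨blk 1 0 (-(Ring.inverse d * c)) (Ring.inverse d), ?_, ?_⟩ <;>
    rw [blk_mul, ← blk_one_zero_zero_one] <;>
    simp [Ring.mul_inverse_cancel_left _ _ hd, Ring.mul_inverse_cancel _ hd,
      Ring.inverse_mul_cancel _ hd]

lemma fundJ_mul_fundJ : (fundJ : K →L[ℂ] K) * fundJ = 1 := by
  rw [fundJ, blk_mul, ← blk_one_zero_zero_one]
  simp

lemma isUnit_fundJ : IsUnit (fundJ : K →L[ℂ] K) :=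
  ⟨⟨fundJ, fundJ, fundJ_mul_fundJ, fundJ_mul_fundJ⟩, rfl⟩

end BlockOperators

lemma star_blk (a b c d : H →L[ℂ] H) :
    star (blk a b c d) = blk (star a) (star c) (star b) (star d) := by
  rw [star_eq_adjoint, eq_comm, eq_adjoint_iff]
  intro x y
  simp only [star_eq_adjoint, WithLp.prod_inner_apply, WithLp.ofLp_fst, WithLp.ofLp_snd,
    blk_apply_fst, blk_apply_snd, inner_add_left, inner_add_right, adjoint_inner_left]
  ring

namespace IsJUnitary

lemma mul_fundJ_mul_star {T : K →L[ℂ] K} (hT : IsJUnitary T) : T * fundJ * star T = fundJ := by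
  obtain ⟨⟨u, rfl⟩, h⟩ := hT
  exact mul_mul_eq_of_mul_mul_eq u fundJ_mul_fundJ h

variable {a b c d : H →L[ℂ] H}

lemma star_mul_blk (hT : IsJUnitary (blk a b c d)) :
    star a * a = 1 + star c * c ∧ star a * b = star c * d ∧ star d * d = 1 + star b * b := by
  have h := hT.2
  rw [star_blk, fundJ, blk_mul, blk_mul, blk_inj] at h
  simp only [mul_one, mul_zero, add_zero, zero_add, mul_neg, neg_mul] at h
  obtain ⟨h₁, h₂, -, h₄⟩ := h
  exact ⟨by rw [← h₁]; abel, add_neg_eq_zero.1 h₂, by rw [← neg_neg (1 : H →L[ℂ] H), ← h₄]; abel⟩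

lemma blk_mul_star (hT : IsJUnitary (blk a b c d)) :
    a * star a = 1 + b * star b ∧ d * star d = 1 + c * star c := by
  have h := hT.mul_fundJ_mul_star
  rw [star_blk, fundJ, blk_mul, blk_mul, blk_inj] at h
  simp only [mul_one, mul_zero, add_zero, zero_add, mul_neg, neg_mul] at h
  obtain ⟨h₁, -, -, h₄⟩ := h
  exact ⟨by rw [← h₁]; abel, by rw [← neg_neg (1 : H →L[ℂ] H), ← h₄]; abel⟩

lemma isUnit_blk_diag (hT : IsJUnitary (blk a b c d)) : IsUnit a ∧ IsUnit d := by
  obtain ⟨ha, -, hd⟩ := hT.star_mul_blk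
  obtain ⟨ha', hd'⟩ := hT.blk_mul_star
  exact ⟨isUnit_of_star_mul_self_eq_one_add ha ha', isUnit_of_star_mul_self_eq_one_add hd hd'⟩

lemma inverse_star_eq_schur (hT : IsJUnitary (blk a b c d)) :
    Ring.inverse (star a) = a - b * Ring.inverse d * c := by
  obtain ⟨ha, hab, -⟩ := hT.star_mul_blk
  obtain ⟨haU, hdU⟩ := hT.isUnit_blk_diag
  rw [← mul_one (Ring.inverse (star a)), Ring.inverse_mul_eq_iff_eq_mul _ _ _ haU.star]
  calc 1 = star a * a - star c * d * Ring.inverse d * c := by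
        rw [Ring.mul_inverse_cancel_right _ _ hdU, ha, add_sub_cancel_right]
    _ = star a * (a - b * Ring.inverse d * c) := by rw [mul_sub, ← hab]; simp only [mul_assoc]

lemma blk_sub_one_eq_mul (hT : IsJUnitary (blk a b c d)) {z : ℂ}
    (hz : z * starRingEnd ℂ z = 1) :
    blk ((starRingEnd ℂ z) • Ring.inverse (star a)) (b * Ring.inverse d) (-(Ring.inverse d * c))
        (z • Ring.inverse d) - 1 =
      (starRingEnd ℂ z • fundJ) * (blk a b c d - z • 1) *
        blk 1 0 (-(Ring.inverse d * c)) (z • Ring.inverse d) := by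
  have hd := hT.isUnit_blk_diag.2
  rw [hT.inverse_star_eq_schur, fundJ, ← blk_one_zero_zero_one, smul_blk, smul_blk, blk_sub,
    blk_sub, blk_mul, blk_mul, blk_inj]
  simp only [mul_assoc, smul_sub, mul_sub, Algebra.smul_mul_assoc, one_mul, Algebra.mul_smul_comm,
    mul_one, smul_smul, hz, one_smul, smul_zero, sub_zero, zero_mul, add_zero, sub_self, mul_neg,
    mul_zero, zero_add, smul_neg, neg_mul, sub_neg_eq_add, add_mul,
    Ring.mul_inverse_cancel_left _ _ hd, neg_add_rev, neg_neg, neg_add_cancel_comm_assoc,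
    Ring.mul_inverse_cancel _ hd, smul_add, true_and]
  constructor <;> abel

end IsJUnitary

end KreinSpace

/-- Theorem 4.5 of the paper: for a `J`-unitary `T = [[a,b],[c,d]]`
and `z` on the unit circle, `T − z·1` is Fredholm if and only if `V(z̄T) − 1` is
Fredholm, where `V(z̄T) = [[z̄(a*)⁻¹, bd⁻¹],[−d⁻¹c, zd⁻¹]]`. -/
theorem zFredholm_iff_V_fredholm (a b c d : H →L[ℂ] H)
    (hT : IsJUnitary (blk a b c d)) (z : ℂ) (hz : ‖z‖ = 1) :
    IsFredholmOp (blk a b c d - z • (1 : K →L[ℂ] K)) ↔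
    IsFredholmOp (blk ((starRingEnd ℂ z) • Ring.inverse (star a)) (b * Ring.inverse d)
        (-(Ring.inverse d * c)) (z • Ring.inverse d) - (1 : K →L[ℂ] K)) := by
  have hzz : z * starRingEnd ℂ z = 1 := by
    rw [Complex.mul_conj', hz]
    norm_num
  have hJ : IsUnit (starRingEnd ℂ z • fundJ : K →L[ℂ] K) :=
    isUnit_fundJ.smul_of_ne_zero (right_ne_zero_of_mul_eq_one hzz)
  have hW : IsUnit (blk 1 0 (-(Ring.inverse d * c)) (z • Ring.inverse d)) :=
    isUnit_blk_one_zero _ (hT.isUnit_blk_diag.2.ringInverse.smul_of_ne_zero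
      (left_ne_zero_of_mul_eq_one hzz))
  rw [hT.blk_sub_one_eq_mul hzz, isFredholmOp_mul_mul_iff hJ hW]
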